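/- The preconditioned KKT matrix E satisfies ‖E‖ ≤ 2 in the spectral norm; equivalently, |⟨z, Ew⟩| ≤ 2‖z‖‖w‖ for all z, w ∈ ℝ^{n_q+2n_u}. -/

import Mathlib

/-!
For `S = P + TᵀT` with `P ⪰ 0` and `s = S^{1/2}` one has `1 - (T s⁻¹)ᵀ (T s⁻¹) = s⁻¹ P s⁻¹ ⪰ 0`,
so `F` and `G` are contractions. Hence `0 ⪯ 1 - FᵀF ⪯ 1` and likewise for `G`, so `‖X‖ ≤ 1`,
while `Y Yᵀ = F Fᵀ + G Gᵀ` gives `‖Y‖² ≤ 2`. Finally, for `v = (v₁, v₂)`,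
`‖E v‖² = ‖X v₁ + Yᵀ v₂‖² + ‖Y v₁‖² ≤ (‖v₁‖ + ‖Y‖ ‖v₂‖)² + 2 ‖v₁‖² ≤ 4 ‖v₁‖² + 4 ‖v₂‖²`.
-/

open Matrix

/-- The vector in Euclidean space obtained by applying the matrix `M` to `x`
(matrix-vector multiplication, viewed as a map between Euclidean spaces). -/
noncomputable def mulVecE {ι κ : Type} [Fintype ι] [Fintype κ] [DecidableEq κ]
    (M : Matrix ι κ ℝ) (x : EuclideanSpace ℝ κ) : EuclideanSpace ℝ ι :=
  Matrix.toEuclideanLin M x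

/-- The spectral norm (Euclidean operator norm) of a matrix. -/
noncomputable def specNorm {ι κ : Type} [Fintype ι] [Fintype κ] [DecidableEq κ]
    (M : Matrix ι κ ℝ) : ℝ :=
  ‖LinearMap.toContinuousLinearMap (Matrix.toEuclideanLin M)‖

/-- The square root of a positive semidefinite matrix, as defined in the older Mathlib
(`Matrix.PosSemidef.sqrt`, since removed). -/
noncomputable def Matrix.PosSemidef.sqrt {n : Type} [Fintype n] [DecidableEq n]
    {A : Matrix n n ℝ} (hA : A.PosSemidef) : Matrix n n ℝ :=
  hA.1.eigenvectorUnitary * diagonal (Real.sqrt ∘ hA.1.eigenvalues) *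
    (star hA.1.eigenvectorUnitary : Matrix n n ℝ)

open WithLp
open scoped Matrix.Norms.L2Operator

namespace Matrix

namespace PosSemidef

variable {n : Type} [Fintype n] [DecidableEq n] {A : Matrix n n ℝ}

theorem sqrt_mul_self (hA : A.PosSemidef) : hA.sqrt * hA.sqrt = A := by
  have hU : (star hA.1.eigenvectorUnitary : Matrix n n ℝ) * hA.1.eigenvectorUnitary = 1 :=
    Unitary.coe_star_mul_self _
  have hD : diagonal (Real.sqrt ∘ hA.1.eigenvalues) * diagonal (Real.sqrt ∘ hA.1.eigenvalues)
      = diagonal (RCLike.ofReal ∘ hA.1.eigenvalues) := by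
    rw [diagonal_mul_diagonal]
    congr 1
    funext i
    simp [Real.mul_self_sqrt (hA.eigenvalues_nonneg i)]
  conv_rhs => rw [hA.1.spectral_theorem, Unitary.conjStarAlgAut_apply, ← hD]
  simp only [PosSemidef.sqrt, Matrix.mul_assoc]
  rw [← Matrix.mul_assoc _ (hA.1.eigenvectorUnitary : Matrix n n ℝ), hU, Matrix.one_mul]

theorem posSemidef_sqrt (hA : A.PosSemidef) : hA.sqrt.PosSemidef := by
  rw [PosSemidef.sqrt, Matrix.star_eq_conjTranspose]
  exact (posSemidef_diagonal_iff.2 fun i => Real.sqrt_nonneg _).mul_mul_conjTranspose_same _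

theorem transpose_sqrt (hA : A.PosSemidef) : hA.sqrtᵀ = hA.sqrt := by
  rw [← conjTranspose_eq_transpose_of_trivial]
  exact hA.posSemidef_sqrt.1

end PosSemidef

theorem PosDef.isUnit_det_sqrt {n : Type} [Fintype n] [DecidableEq n] {A : Matrix n n ℝ}
    (hA : A.PosDef) : IsUnit hA.posSemidef.sqrt.det := by
  refine isUnit_iff_ne_zero.2 fun h0 => hA.det_pos.ne' ?_
  rw [← hA.posSemidef.sqrt_mul_self, det_mul, h0, zero_mul]

variable {m n : Type*} [Fintype m] [Fintype n]

theorem posSemidef_transpose_mul_self (M : Matrix m n ℝ) : (Mᵀ * M).PosSemidef := by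
  simpa only [conjTranspose_eq_transpose_of_trivial] using posSemidef_conjTranspose_mul_self M

theorem one_sub_transpose_mul_self_mul_inv_eq [DecidableEq n] {P s : Matrix n n ℝ}
    (T : Matrix m n ℝ) (hs : sᵀ = s) (hdet : IsUnit s.det) (hss : s * s = P + Tᵀ * T) :
    1 - (T * s⁻¹)ᵀ * (T * s⁻¹) = s⁻¹ * P * s⁻¹ := by
  have hTT : Tᵀ * T = s * s - P := by rw [hss, add_sub_cancel_left]
  rw [transpose_mul, transpose_nonsing_inv, hs, Matrix.mul_assoc, ← Matrix.mul_assoc Tᵀ, hTT]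
  simp only [Matrix.sub_mul, Matrix.mul_sub, ← Matrix.mul_assoc, nonsing_inv_mul s hdet,
    Matrix.mul_assoc s, mul_nonsing_inv s hdet, Matrix.mul_one]
  abel

theorem norm_toLp_sq (v : n → ℝ) : ‖toLp 2 v‖ ^ 2 = v ⬝ᵥ v := by
  rw [← real_inner_self_eq_norm_sq, EuclideanSpace.inner_toLp_toLp, star_trivial]

theorem norm_toLp_sumElim_sq (v : m → ℝ) (w : n → ℝ) :
    ‖toLp 2 (Sum.elim v w)‖ ^ 2 = ‖toLp 2 v‖ ^ 2 + ‖toLp 2 w‖ ^ 2 := by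
  simp only [norm_toLp_sq, dotProduct, Fintype.sum_sum_type, Sum.elim_inl, Sum.elim_inr]

variable [DecidableEq n]

theorem l2_opNorm_transpose [DecidableEq m] (M : Matrix m n ℝ) : ‖Mᵀ‖ = ‖M‖ := by
  rw [← conjTranspose_eq_transpose_of_trivial, l2_opNorm_conjTranspose]

theorem l2_opNorm_sq_eq_mul_transpose [DecidableEq m] (M : Matrix m n ℝ) :
    ‖M‖ ^ 2 = ‖M * Mᵀ‖ := by
  rw [← l2_opNorm_transpose M, sq, ← l2_opNorm_conjTranspose_mul_self,
    conjTranspose_eq_transpose_of_trivial, transpose_transpose]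

theorem norm_toLp_mulVec_le (M : Matrix m n ℝ) (v : n → ℝ) :
    ‖toLp 2 (M *ᵥ v)‖ ≤ ‖M‖ * ‖toLp 2 v‖ :=
  l2_opNorm_mulVec M (toLp 2 v)

theorem norm_toLp_mulVec_sq_le (M : Matrix m n ℝ) (v : n → ℝ) :
    ‖toLp 2 (M *ᵥ v)‖ ^ 2 ≤ ‖M‖ ^ 2 * ‖toLp 2 v‖ ^ 2 := by
  rw [← mul_pow]
  exact pow_le_pow_left₀ (norm_nonneg _) (norm_toLp_mulVec_le M v) 2

theorem l2_opNorm_le_of_mulVec_le {M : Matrix m n ℝ} {c : ℝ} (hc : 0 ≤ c)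
    (h : ∀ v, ‖toLp 2 (M *ᵥ v)‖ ≤ c * ‖toLp 2 v‖) : ‖M‖ ≤ c :=
  ContinuousLinearMap.opNorm_le_bound _ hc fun x => h (ofLp x)

theorem l2_opNorm_le_one_of_posSemidef_one_sub {M : Matrix m n ℝ}
    (h : (1 - Mᵀ * M).PosSemidef) : ‖M‖ ≤ 1 := by
  refine l2_opNorm_le_of_mulVec_le zero_le_one fun v => ?_
  have hv := h.dotProduct_mulVec_nonneg v
  rw [star_trivial, sub_mulVec, one_mulVec, dotProduct_sub, ← mulVec_mulVec,
    dotProduct_mulVec, vecMul_transpose, sub_nonneg] at hv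
  rw [one_mul, ← sq_le_sq₀ (norm_nonneg _) (norm_nonneg _), norm_toLp_sq, norm_toLp_sq]
  exact hv

theorem l2_opNorm_one_sub_transpose_mul_self_le_one [DecidableEq m] {M : Matrix m n ℝ}
    (h : ‖M‖ ≤ 1) : ‖1 - Mᵀ * M‖ ≤ 1 := by
  refine l2_opNorm_le_of_mulVec_le zero_le_one fun v => ?_
  have hMt : ‖toLp 2 (Mᵀ *ᵥ (M *ᵥ v))‖ ≤ ‖toLp 2 (M *ᵥ v)‖ :=
    (norm_toLp_mulVec_le Mᵀ (M *ᵥ v)).trans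
      (mul_le_of_le_one_left (norm_nonneg _) ((l2_opNorm_transpose M).trans_le h))
  have hexpand : ‖toLp 2 ((1 - Mᵀ * M) *ᵥ v)‖ ^ 2
      = ‖toLp 2 v‖ ^ 2 - 2 * ‖toLp 2 (M *ᵥ v)‖ ^ 2 + ‖toLp 2 (Mᵀ *ᵥ (M *ᵥ v))‖ ^ 2 := by
    have hcross : v ⬝ᵥ (Mᵀ *ᵥ (M *ᵥ v)) = (M *ᵥ v) ⬝ᵥ (M *ᵥ v) := by
      rw [dotProduct_mulVec, vecMul_transpose]
    simp only [norm_toLp_sq, sub_mulVec, one_mulVec, ← mulVec_mulVec, sub_dotProduct,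
      dotProduct_sub, dotProduct_comm _ v]
    rw [hcross]
    ring
  rw [one_mul, ← sq_le_sq₀ (norm_nonneg _) (norm_nonneg _), hexpand]
  nlinarith [norm_nonneg (toLp 2 (Mᵀ *ᵥ (M *ᵥ v)))]

theorem l2_opNorm_mul_inv_sqrt_le_one {n : Type} [Fintype n] [DecidableEq n] {P : Matrix n n ℝ}
    (hP : P.PosSemidef) (T : Matrix m n ℝ) (hS : (P + Tᵀ * T).PosDef) :
    ‖T * hS.posSemidef.sqrt⁻¹‖ ≤ 1 := by
  set s := hS.posSemidef.sqrt
  have hs : sᵀ = s := hS.posSemidef.transpose_sqrt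
  refine l2_opNorm_le_one_of_posSemidef_one_sub ?_
  rw [one_sub_transpose_mul_self_mul_inv_eq T hs hS.isUnit_det_sqrt hS.posSemidef.sqrt_mul_self]
  simpa only [conjTranspose_eq_transpose_of_trivial, transpose_nonsing_inv, hs] using
    hP.mul_mul_conjTranspose_same s⁻¹

section Blocks

variable {m' n' : Type*} [Fintype m'] [Fintype n'] [DecidableEq n']

theorem l2_opNorm_le_of_mulVec_sumElim_sq_le {M : Matrix m (n ⊕ n') ℝ} {c : ℝ} (hc : 0 ≤ c)
    (h : ∀ p q, ‖toLp 2 (M *ᵥ Sum.elim p q)‖ ^ 2 ≤ c ^ 2 * (‖toLp 2 p‖ ^ 2 + ‖toLp 2 q‖ ^ 2)) :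
    ‖M‖ ≤ c := by
  refine l2_opNorm_le_of_mulVec_le hc fun v => ?_
  rw [← sq_le_sq₀ (norm_nonneg _) (by positivity), mul_pow, ← Sum.elim_comp_inl_inr v,
    norm_toLp_sumElim_sq]
  exact h _ _

theorem l2_opNorm_fromBlocks_zero_zero_le (A : Matrix m n ℝ) (D : Matrix m' n' ℝ) :
    ‖fromBlocks A 0 0 D‖ ≤ max ‖A‖ ‖D‖ := by
  refine l2_opNorm_le_of_mulVec_sumElim_sq_le (le_max_of_le_left (norm_nonneg _)) fun p q => ?_
  simp only [fromBlocks_mulVec, Sum.elim_comp_inl, Sum.elim_comp_inr, zero_mulVec, add_zero,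
    zero_add, norm_toLp_sumElim_sq]
  have hA : ‖A‖ ^ 2 ≤ max ‖A‖ ‖D‖ ^ 2 := by gcongr; exact le_max_left _ _
  have hD : ‖D‖ ^ 2 ≤ max ‖A‖ ‖D‖ ^ 2 := by gcongr; exact le_max_right _ _
  nlinarith [norm_toLp_mulVec_sq_le A p, norm_toLp_mulVec_sq_le D q, sq_nonneg ‖toLp 2 p‖,
    sq_nonneg ‖toLp 2 q‖]

theorem l2_opNorm_fromCols_sq_le [DecidableEq m] (A : Matrix m n ℝ) (B : Matrix m n' ℝ) :
    ‖fromCols A B‖ ^ 2 ≤ ‖A‖ ^ 2 + ‖B‖ ^ 2 := by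
  simp only [l2_opNorm_sq_eq_mul_transpose, transpose_fromCols, fromCols_mul_fromRows]
  exact norm_add_le _ _

theorem l2_opNorm_fromBlocks_transpose_zero_le_two [DecidableEq m] {X : Matrix n n ℝ}
    {Y : Matrix m n ℝ} (hX : ‖X‖ ≤ 1) (hY : ‖Y‖ ^ 2 ≤ 2) : ‖fromBlocks X Yᵀ Y 0‖ ≤ 2 := by
  refine l2_opNorm_le_of_mulVec_sumElim_sq_le zero_le_two fun p q => ?_
  simp only [fromBlocks_mulVec, Sum.elim_comp_inl, Sum.elim_comp_inr, zero_mulVec, add_zero,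
    norm_toLp_sumElim_sq, toLp_add]
  have hfirst : ‖toLp 2 (X *ᵥ p) + toLp 2 (Yᵀ *ᵥ q)‖ ≤ ‖toLp 2 p‖ + ‖Y‖ * ‖toLp 2 q‖ := by
    refine (norm_add_le _ _).trans (add_le_add ?_ ?_)
    · exact (norm_toLp_mulVec_le X p).trans (mul_le_of_le_one_left (norm_nonneg _) hX)
    · exact l2_opNorm_transpose Y ▸ norm_toLp_mulVec_le Yᵀ q
  have hfirst_sq : ‖toLp 2 (X *ᵥ p) + toLp 2 (Yᵀ *ᵥ q)‖ ^ 2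
      ≤ 2 * ‖toLp 2 p‖ ^ 2 + 2 * ‖Y‖ ^ 2 * ‖toLp 2 q‖ ^ 2 := by
    nlinarith [pow_le_pow_left₀ (norm_nonneg _) hfirst 2,
      sq_nonneg (‖toLp 2 p‖ - ‖Y‖ * ‖toLp 2 q‖)]
  nlinarith [norm_toLp_mulVec_sq_le Y p, sq_nonneg ‖toLp 2 p‖, sq_nonneg ‖toLp 2 q‖]

end Blocks

end Matrix

theorem specNorm_eq_l2_opNorm {ι κ : Type} [Fintype ι] [Fintype κ] [DecidableEq κ]
    (M : Matrix ι κ ℝ) : specNorm M = ‖M‖ :=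
  rfl

theorem norm_mulVecE_le {ι κ : Type} [Fintype ι] [Fintype κ] [DecidableEq κ]
    (M : Matrix ι κ ℝ) (x : EuclideanSpace ℝ κ) : ‖mulVecE M x‖ ≤ ‖M‖ * ‖x‖ :=
  l2_opNorm_mulVec M x

theorem stmt8_general
    (nq nu nobs : ℕ) (α ρ : ℝ) (hα : 0 < α) (hρ : 0 < ρ)
    (R : Matrix (Fin nq) (Fin nq) ℝ) (T : Matrix (Fin nu) (Fin nq) ℝ)
    (A : Matrix (Fin nu) (Fin nu) ℝ) (B : Matrix (Fin nobs) (Fin nu) ℝ)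
    (hSR : ((α / ρ) • (Rᵀ * R) + Tᵀ * T).PosDef)
    (hSA : ((1 / ρ) • (Bᵀ * B) + Aᵀ * A).PosDef)
    (F : Matrix (Fin nu) (Fin nq) ℝ) (hF : F = T * hSR.posSemidef.sqrt⁻¹)
    (G : Matrix (Fin nu) (Fin nu) ℝ) (hG : G = A * hSA.posSemidef.sqrt⁻¹)
    (X : Matrix (Fin nq ⊕ Fin nu) (Fin nq ⊕ Fin nu) ℝ)
    (hX : X = fromBlocks (1 - Fᵀ * F) 0 0 (1 - Gᵀ * G))
    (Y : Matrix (Fin nu) (Fin nq ⊕ Fin nu) ℝ)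
    (hY : Y = fromCols F G)
    (E : Matrix ((Fin nq ⊕ Fin nu) ⊕ Fin nu) ((Fin nq ⊕ Fin nu) ⊕ Fin nu) ℝ)
    (hE : E = fromBlocks X Yᵀ Y 0) :
    specNorm E ≤ 2 ∧
    ∀ z w : EuclideanSpace ℝ ((Fin nq ⊕ Fin nu) ⊕ Fin nu),
      |(inner ℝ z (mulVecE E w) : ℝ)| ≤ 2 * ‖z‖ * ‖w‖ := by
  have hF1 : ‖F‖ ≤ 1 := hF ▸ l2_opNorm_mul_inv_sqrt_le_one
    ((posSemidef_transpose_mul_self R).smul (by positivity)) T hSR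
  have hG1 : ‖G‖ ≤ 1 := hG ▸ l2_opNorm_mul_inv_sqrt_le_one
    ((posSemidef_transpose_mul_self B).smul (by positivity)) A hSA
  have hX1 : ‖X‖ ≤ 1 := hX ▸ (l2_opNorm_fromBlocks_zero_zero_le _ _).trans
    (max_le (l2_opNorm_one_sub_transpose_mul_self_le_one hF1)
      (l2_opNorm_one_sub_transpose_mul_self_le_one hG1))
  have hY2 : ‖Y‖ ^ 2 ≤ 2 := hY ▸ (l2_opNorm_fromCols_sq_le F G).trans
    ((add_le_add (pow_le_one₀ (norm_nonneg F) hF1) (pow_le_one₀ (norm_nonneg G) hG1)).trans_eq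
      one_add_one_eq_two)
  have hE2 : ‖E‖ ≤ 2 := hE ▸ l2_opNorm_fromBlocks_transpose_zero_le_two hX1 hY2
  refine ⟨(specNorm_eq_l2_opNorm E).trans_le hE2, fun z w => ?_⟩
  calc |(inner ℝ z (mulVecE E w) : ℝ)| ≤ ‖z‖ * ‖mulVecE E w‖ := abs_real_inner_le_norm _ _
    _ ≤ ‖z‖ * (2 * ‖w‖) := by gcongr; exact (norm_mulVecE_le E w).trans (by gcongr)
    _ = 2 * ‖z‖ * ‖w‖ := by ring

/-- Continuity of the preconditioned KKT matrix: `‖E‖ ≤ 2` in the spectral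
norm; equivalently `|⟨z, Ew⟩| ≤ 2‖z‖‖w‖` for all `z, w`. -/
theorem stmt8
    (nq nu nobs : ℕ) (α ρ : ℝ) (hα : 0 < α) (hρ : 0 < ρ)
    (R : Matrix (Fin nq) (Fin nq) ℝ) (T : Matrix (Fin nu) (Fin nq) ℝ)
    (A : Matrix (Fin nu) (Fin nu) ℝ) (B : Matrix (Fin nobs) (Fin nu) ℝ)
    (hR : IsUnit R.det) (hA : IsUnit A.det)
    (hSR : ((α / ρ) • (Rᵀ * R) + Tᵀ * T).PosDef)
    (hSA : ((1 / ρ) • (Bᵀ * B) + Aᵀ * A).PosDef)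
    (F : Matrix (Fin nu) (Fin nq) ℝ) (hF : F = T * hSR.posSemidef.sqrt⁻¹)
    (G : Matrix (Fin nu) (Fin nu) ℝ) (hG : G = A * hSA.posSemidef.sqrt⁻¹)
    (X : Matrix (Fin nq ⊕ Fin nu) (Fin nq ⊕ Fin nu) ℝ)
    (hX : X = fromBlocks (1 - Fᵀ * F) 0 0 (1 - Gᵀ * G))
    (Y : Matrix (Fin nu) (Fin nq ⊕ Fin nu) ℝ)
    (hY : Y = fromCols F G)
    (E : Matrix ((Fin nq ⊕ Fin nu) ⊕ Fin nu) ((Fin nq ⊕ Fin nu) ⊕ Fin nu) ℝ)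
    (hE : E = fromBlocks X Yᵀ Y 0) :
    specNorm E ≤ 2 ∧
    ∀ z w : EuclideanSpace ℝ ((Fin nq ⊕ Fin nu) ⊕ Fin nu),
      |(inner ℝ z (mulVecE E w) : ℝ)| ≤ 2 * ‖z‖ * ‖w‖ :=
  stmt8_general nq nu nobs α ρ hα hρ R T A B hSR hSA F hF G hG X hX Y hY E hE
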